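/- Let H be a real inner product space, v₁, …, v_T ∈ H with ‖v_t‖ ≤ 1 for all t, and σ > 0. For each t, let K_{t−1} be the Gram matrix of v₁, …, v_{t−1}, k_{t−1} = (⟨v_i, v_t⟩)_{i≤t−1}, and s_{t−1}² = ‖v_t‖² − k_{t−1}ᵀ (K_{t−1} + σ²I)⁻¹ k_{t−1} (with s₀² = ‖v₁‖²). Then Σ_{t=1}^T s_{t−1}² ≤ (2 / log(1 + σ⁻²)) · ½ log det(I + σ⁻² K_T), where K_T is the Gram matrix of v₁, …, v_T. -/

import Mathlib

/-!
By the Schur complement formula, `det (K_t + σ² I) = det (K_{t-1} + σ² I) · (s_{t-1}² + σ²)`,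
so `log det (I + σ⁻² K_T) = ∑ₜ log (1 + σ⁻² s_{t-1}²)`. Each `s_{t-1}²` lies in
`[0, ‖v_t‖²] ⊆ [0, 1]`, and on `[0, 1]` Bernoulli's inequality `(1 + b)^s ≤ 1 + b s` gives
`s log (1 + b) ≤ log (1 + b s)`.
-/

open scoped RealInnerProductSpace Matrix

/-- The Gram matrix of a finite family of vectors in a real inner product space. -/
noncomputable def gram {H : Type*} [NormedAddCommGroup H] [InnerProductSpace ℝ H]
    {T : ℕ} (v : Fin T → H) : Matrix (Fin T) (Fin T) ℝ :=
  Matrix.of fun i j => ⟪v i, v j⟫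

/-- The vector of inner products of a point `x` with the family `v`. -/
noncomputable def kvec {H : Type*} [NormedAddCommGroup H] [InnerProductSpace ℝ H]
    {T : ℕ} (v : Fin T → H) (x : H) : Fin T → ℝ :=
  fun i => ⟪v i, x⟫

/-- The noise-regularized sequential posterior variance
`s(x)² = ‖x‖² - k(x)ᵀ (K + σ²I)⁻¹ k(x)` of a point `x` given observations at `v`. -/
noncomputable def postVarSq {H : Type*} [NormedAddCommGroup H] [InnerProductSpace ℝ H]
    {T : ℕ} (σ : ℝ) (v : Fin T → H) (x : H) : ℝ :=
  ‖x‖ ^ 2 - kvec v x ⬝ᵥ ((gram v + σ ^ 2 • (1 : Matrix (Fin T) (Fin T) ℝ))⁻¹ *ᵥ kvec v x)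

open Finset

theorem Matrix.det_succ_eq_det_mul_schur {α : Type*} [Field α] {n : ℕ}
    (M : Matrix (Fin (n + 1)) (Fin (n + 1)) α)
    (hA : IsUnit (M.submatrix Fin.castSucc Fin.castSucc).det) :
    M.det = (M.submatrix Fin.castSucc Fin.castSucc).det *
      (M (Fin.last n) (Fin.last n) - (fun j => M (Fin.last n) j.castSucc) ⬝ᵥ
        ((M.submatrix Fin.castSucc Fin.castSucc)⁻¹ *ᵥ fun i => M i.castSucc (Fin.last n))) := by
  set A := M.submatrix Fin.castSucc Fin.castSucc
  have : Invertible A := A.invertibleOfIsUnitDet hA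
  have hblocks : M.submatrix finSumFinEquiv finSumFinEquiv =
      Matrix.fromBlocks A (Matrix.replicateCol (Fin 1) fun i => M i.castSucc (Fin.last n))
        (Matrix.replicateRow (Fin 1) fun j => M (Fin.last n) j.castSucc)
        (Matrix.of fun _ _ => M (Fin.last n) (Fin.last n)) := by
    ext (i | i) (j | j) <;> simp [Fin.fin_one_eq_zero] <;> rfl
  rw [← M.det_submatrix_equiv_self finSumFinEquiv, hblocks, Matrix.det_fromBlocks₁₁,
    Matrix.invOf_eq_nonsing_inv, Matrix.det_unique (n := Fin 1), Matrix.mul_assoc,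
    ← Matrix.replicateCol_mulVec]
  rfl

theorem real_inner_le_norm_sq_of_norm_sq_le_inner {E : Type*} [NormedAddCommGroup E]
    [InnerProductSpace ℝ E] {u x : E} (h : ‖u‖ ^ 2 ≤ ⟪u, x⟫) : ⟪u, x⟫ ≤ ‖x‖ ^ 2 := by
  nlinarith [norm_sub_sq_real x u, real_inner_comm u x, sq_nonneg ‖x - u‖]

theorem mul_log_one_add_le_log_one_add_mul {b s : ℝ} (hb : -1 < b) (hs₀ : 0 ≤ s) (hs₁ : s ≤ 1) :
    s * Real.log (1 + b) ≤ Real.log (1 + b * s) := by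
  rw [← Real.log_rpow (by linarith), mul_comm b]
  exact Real.log_le_log (Real.rpow_pos_of_pos (by linarith) s)
    (rpow_one_add_le_one_add_mul_self hb.le hs₀ hs₁)

section PosteriorVariance

variable {H : Type*} [NormedAddCommGroup H] [InnerProductSpace ℝ H]

theorem posDef_gram_add_smul_one {T : ℕ} (v : Fin T → H) {σ : ℝ} (hσ : σ ≠ 0) :
    (gram v + σ ^ 2 • (1 : Matrix (Fin T) (Fin T) ℝ)).PosDef :=
  .posSemidef_add (Matrix.posSemidef_gram ℝ v) (Matrix.PosDef.one.smul (by positivity))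

theorem postVarSq_le_norm_sq {T : ℕ} (v : Fin T → H) {σ : ℝ} (hσ : σ ≠ 0) (x : H) :
    postVarSq σ v x ≤ ‖x‖ ^ 2 :=
  sub_le_self _ <| by
    simpa using (posDef_gram_add_smul_one v hσ).inv.posSemidef.dotProduct_mulVec_nonneg
      (kvec v x)

theorem postVarSq_nonneg {T : ℕ} (v : Fin T → H) {σ : ℝ} (hσ : σ ≠ 0) (x : H) :
    0 ≤ postVarSq σ v x := by
  set A := gram v + σ ^ 2 • (1 : Matrix (Fin T) (Fin T) ℝ)
  set w := A⁻¹ *ᵥ kvec v x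
  set u := ∑ i, w i • v i
  have hAw : A *ᵥ w = kvec v x := by
    rw [Matrix.mulVec_mulVec, Matrix.mul_nonsing_inv _
      ((Matrix.isUnit_iff_isUnit_det _).1 (posDef_gram_add_smul_one v hσ).isUnit),
      Matrix.one_mulVec]
  -- `kᵀ A⁻¹ k = wᵀ A w` is both `⟪u, x⟫` and `‖u‖² + σ² ‖w‖²`
  have h_inner : kvec v x ⬝ᵥ w = ⟪u, x⟫ := by
    simp only [u, dotProduct, kvec, sum_inner, real_inner_smul_left, mul_comm]
  have h_quad : kvec v x ⬝ᵥ w = ‖u‖ ^ 2 + σ ^ 2 * (w ⬝ᵥ w) := by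
    rw [← hAw, dotProduct_comm]
    have h_gram : w ⬝ᵥ gram v *ᵥ w = ‖u‖ ^ 2 := by
      have := Matrix.star_dotProduct_gram_mulVec (𝕜 := ℝ) v w w
      rwa [star_trivial, real_inner_self_eq_norm_sq] at this
    simp only [A, Matrix.add_mulVec, dotProduct_add, h_gram, Matrix.smul_mulVec,
      Matrix.one_mulVec, dotProduct_smul, smul_eq_mul]
  have h_norm : ‖u‖ ^ 2 ≤ ⟪u, x⟫ := by
    have := dotProduct_star_self_nonneg w
    rw [star_trivial] at this
    nlinarith [mul_nonneg (sq_nonneg σ) this]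
  simp only [postVarSq]
  linarith [real_inner_le_norm_sq_of_norm_sq_le_inner h_norm]

end PosteriorVariance

section InformationGain

variable {H : Type*} [NormedAddCommGroup H] [InnerProductSpace ℝ H] {σ : ℝ}

theorem det_gram_add_smul_one_succ {t : ℕ} (w : Fin (t + 1) → H) (hσ : σ ≠ 0) :
    (gram w + σ ^ 2 • (1 : Matrix (Fin (t + 1)) (Fin (t + 1)) ℝ)).det =
      (gram (fun i : Fin t => w i.castSucc) + σ ^ 2 • (1 : Matrix (Fin t) (Fin t) ℝ)).det *
        (postVarSq σ (fun i : Fin t => w i.castSucc) (w (Fin.last t)) + σ ^ 2) := by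
  have h_sub : (gram w + σ ^ 2 • (1 : Matrix (Fin (t + 1)) (Fin (t + 1)) ℝ)).submatrix
      Fin.castSucc Fin.castSucc = gram (fun i : Fin t => w i.castSucc) + σ ^ 2 • 1 := by
    ext i j
    simp [gram, Matrix.one_apply]
  have h_unit := (posDef_gram_add_smul_one (fun i : Fin t => w i.castSucc) hσ).det_pos.ne'.isUnit
  rw [Matrix.det_succ_eq_det_mul_schur _ (h_sub ▸ h_unit), h_sub]
  congr 1
  simp [postVarSq, gram, (Fin.castSucc_ne_last _).symm, real_inner_comm, sub_add_eq_add_sub]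
  rfl

theorem det_gram_add_smul_one_eq_prod (v : ℕ → H) (hσ : σ ≠ 0) (T : ℕ) :
    (gram (fun i : Fin T => v i) + σ ^ 2 • (1 : Matrix (Fin T) (Fin T) ℝ)).det =
      ∏ t ∈ range T, (postVarSq σ (fun i : Fin t => v i) (v t) + σ ^ 2) := by
  induction T with
  | zero => simp
  | succ T ih => rw [prod_range_succ, ← ih, det_gram_add_smul_one_succ _ hσ]; rfl

theorem det_one_add_smul_gram_eq_prod (v : ℕ → H) (hσ : σ ≠ 0) (T : ℕ) :
    ((1 : Matrix (Fin T) (Fin T) ℝ) + (σ ^ 2)⁻¹ • gram (fun i : Fin T => v i)).det =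
      ∏ t ∈ range T, (1 + (σ ^ 2)⁻¹ * postVarSq σ (fun i : Fin t => v i) (v t)) := by
  have hσ2 : σ ^ 2 ≠ 0 := pow_ne_zero 2 hσ
  have h_smul : (1 : Matrix (Fin T) (Fin T) ℝ) + (σ ^ 2)⁻¹ • gram (fun i : Fin T => v i) =
      (σ ^ 2)⁻¹ • (gram (fun i : Fin T => v i) + σ ^ 2 • 1) := by
    rw [smul_add, smul_smul, inv_mul_cancel₀ hσ2, one_smul, add_comm]
  rw [h_smul, Matrix.det_smul, det_gram_add_smul_one_eq_prod v hσ, Fintype.card_fin]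
  nth_rw 1 [← card_range T]
  rw [pow_card_mul_prod]
  refine prod_congr rfl fun t _ => ?_
  rw [mul_add, inv_mul_cancel₀ hσ2, add_comm]

end InformationGain

/-- **Sum of posterior variances bounded by the information gain (Equation (35)).**
For unit-norm-bounded feature vectors, the sum of sequential noise-regularized posterior
variances is at most `(2 / log(1 + σ⁻²)) · ½ log det(I + σ⁻² K_T)`. -/
theorem sum_posterior_variances_le_info_gain {H : Type*}
    [NormedAddCommGroup H] [InnerProductSpace ℝ H]
    (T : ℕ) (v : ℕ → H) (hv : ∀ t, 1 ≤ t → t ≤ T → ‖v t‖ ≤ 1)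
    (σ : ℝ) (hσ : 0 < σ) :
    ∑ t ∈ Finset.range T, postVarSq σ (fun i : Fin t => v (i.1 + 1)) (v (t + 1))
      ≤ (2 / Real.log (1 + (σ ^ 2)⁻¹)) *
          (1 / 2 * Real.log ((1 : Matrix (Fin T) (Fin T) ℝ)
              + (σ ^ 2)⁻¹ • gram (fun i : Fin T => v (i.1 + 1))).det) := by
  have hσ₀ : σ ≠ 0 := hσ.ne'
  set b := (σ ^ 2)⁻¹
  have hb : 0 < b := by positivity
  have hL : 0 < Real.log (1 + b) := Real.log_pos (by linarith)
  set s : ℕ → ℝ := fun t => postVarSq σ (fun i : Fin t => v (i.1 + 1)) (v (t + 1))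
  have hs₀ : ∀ t, 0 ≤ s t := fun t => postVarSq_nonneg _ hσ₀ _
  have hs₁ : ∀ t ∈ range T, s t ≤ 1 := fun t ht =>
    (postVarSq_le_norm_sq _ hσ₀ _).trans <|
      pow_le_one₀ (norm_nonneg _) (hv (t + 1) (by omega) (by simp at ht; omega))
  rw [det_one_add_smul_gram_eq_prod (fun n => v (n + 1)) hσ₀ T,
    Real.log_prod fun t _ => by have := hs₀ t; positivity]
  calc ∑ t ∈ range T, s t
      ≤ ∑ t ∈ range T, Real.log (1 + b * s t) / Real.log (1 + b) :=
        sum_le_sum fun t ht =>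
          (le_div_iff₀ hL).2 (mul_log_one_add_le_log_one_add_mul (by linarith) (hs₀ t) (hs₁ t ht))
    _ = _ := by rw [← sum_div]; ring
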